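/- arXiv:2602.18197 — 2 statements merged into one kernel-verified Lean document; each statement's English description precedes it below -/
import Mathlib

section
/- Let Γ ↷ X be an action on a Hausdorff space such that the collection of regular supports {rsupp(γ) : γ ∈ Γ} forms a basis for the topology of X. If ρ₁, ρ₂ : Y → X both satisfy ρᵢ⁻¹(rsupp_X(γ)) = rsupp_Y(Φ(γ)) for all γ ∈ Γ (for a fixed homomorphism Φ : Γ → Homeo(Y)), then ρ₁ = ρ₂. -/
def openSupp {G X : Type*} [Group G] [MulAction G X] (γ : G) : Set X :=
  {x | γ • x ≠ x}

def rsupp {G X : Type*} [Group G] [TopologicalSpace X] [MulAction G X] (γ : G) : Set X :=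
  interior (closure (openSupp γ))

open TopologicalSpace

theorem TopologicalSpace.IsTopologicalBasis.eq_of_preimage_eq {X Y : Type*}
    [TopologicalSpace X] [T0Space X] {b : Set (Set X)} (hb : IsTopologicalBasis b)
    {f g : Y → X} (h : ∀ s ∈ b, f ⁻¹' s = g ⁻¹' s) : f = g :=
  funext fun y ↦ (hb.inseparable_iff.2 fun s hs ↦ Set.ext_iff.1 (h s hs) y).eq

/-- If the regular supports form a basis of the Hausdorff space `X`, then anchor maps
are unique: any two maps `ρ₁, ρ₂ : Y → X` with `ρᵢ⁻¹(rsupp_X γ) = rsupp_Y (Φ γ)`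
for all `γ` coincide. -/
theorem anchor_map_unique
    {G H X Y : Type*} [Group G] [Group H]
    [TopologicalSpace X] [TopologicalSpace Y] [T2Space X]
    [MulAction G X] [MulAction H Y]
    (hbasis : TopologicalSpace.IsTopologicalBasis
      {s : Set X | ∃ γ : G, s = rsupp (X := X) γ})
    (Φ : G →* H) (ρ₁ ρ₂ : Y → X)
    (h₁ : ∀ γ : G, ρ₁ ⁻¹' (rsupp (X := X) γ) = rsupp (X := Y) (Φ γ))
    (h₂ : ∀ γ : G, ρ₂ ⁻¹' (rsupp (X := X) γ) = rsupp (X := Y) (Φ γ)) :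
    ρ₁ = ρ₂ :=
  hbasis.eq_of_preimage_eq fun _ ⟨γ, hγ⟩ ↦ by rw [hγ, h₁, h₂]
end

section
/- In the generalized Brin–Thompson group V_{k₁,...,k_m} acting on X = ∏ᵢ {0,...,kᵢ-1}^ℕ, the regular support of the homeomorphism induced by a table (v; u) equals the union of the cylinder sets ∏ᵢ uᵢ^{(j)} X_{kᵢ} over those indices j with u^{(j)} ≠ v^{(j)}; equivalently, within each cylinder u^{(j)}X with u^{(j)} ≠ v^{(j)}, the set of fixed points of the induced homeomorphism is nowhere dense. -/
/-!
A fixed point of `ψ` in the cylinder `uʲX` has the form `vʲy = uʲy` for one tail `y`. If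
`uʲ ≠ vʲ`, then in a coordinate `i` with `uʲᵢ ≠ vʲᵢ` the tail `yᵢ` solves a word equation
`p·s = q·s` with `p ≠ q`, which has at most one solution: reading it at distance `|q| - |p|`
determines `s` letter by letter. Hence all fixed points in `uʲX` share their `i`-th coordinate,
and as `{0,…,kᵢ-1}^ℕ` has no isolated points for `kᵢ ≥ 2`, they form a closed set with empty
interior. On the cylinders with `uʲ = vʲ` the map `ψ` is the identity, so the closure of the
support is the clopen union of the remaining cylinders.
-/

/-- Append a finite word in front of an infinite sequence. -/
def wordAppend {α : Type*} (w : List α) (s : ℕ → α) : ℕ → α :=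
  fun n => if h : n < w.length then w.get ⟨n, h⟩ else s (n - w.length)

/-- Append a tuple of finite words coordinatewise. -/
def tupleAppend {m : ℕ} {k : Fin m → ℕ} (w : ∀ i : Fin m, List (Fin (k i)))
    (x : ∀ i : Fin m, ℕ → Fin (k i)) : ∀ i : Fin m, ℕ → Fin (k i) :=
  fun i => wordAppend (w i) (x i)

/-- The cylinder set of a tuple of finite words. -/
def cyl {m : ℕ} {k : Fin m → ℕ} (w : ∀ i : Fin m, List (Fin (k i))) :
    Set (∀ i : Fin m, ℕ → Fin (k i)) :=
  Set.range (tupleAppend w)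

open Filter Topology Set

instance Pi.perfectSpace_of_infinite {ι α : Type*} [Infinite ι] [TopologicalSpace α]
    [Nontrivial α] : PerfectSpace (ι → α) := by
  classical
  refine perfectSpace_iff_forall_not_isolated.mpr fun x => ?_
  choose b hb using fun i => exists_ne (x i)
  have hlim : Tendsto (fun i => Function.update x i (b i)) cofinite (𝓝 x) :=
    tendsto_pi_nhds.mpr fun n => tendsto_const_nhds.congr'
      ((eventually_cofinite_ne n).mono fun i hi => (Function.update_of_ne hi.symm _ _).symm)
  refine mem_closure_iff_nhdsWithin_neBot.mp (mem_closure_of_tendsto hlim ?_)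
  exact Eventually.of_forall fun i (h : Function.update x i (b i) = x) =>
    hb i (by simpa using congrFun h i)

theorem interior_eq_empty_of_image_eval_subsingleton {ι : Type*} {X : ι → Type*}
    [∀ i, TopologicalSpace (X i)] {i : ι} [PerfectSpace (X i)] {s : Set (∀ i, X i)}
    (hs : (Function.eval i '' s).Subsingleton) : interior s = ∅ := by
  refine eq_empty_of_forall_notMem fun x hx => ?_
  have hsub : s ⊆ Function.eval i ⁻¹' {x i} := fun y hy =>
    hs (mem_image_of_mem _ hy) (mem_image_of_mem _ (interior_subset hx))
  have := interior_mono hsub hx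
  rwa [← (isOpenMap_eval i).preimage_interior_eq_interior_preimage (continuous_apply i),
    interior_singleton] at this

theorem IsOpen.subset_closure_compl {X : Type*} [TopologicalSpace X] {s t : Set X}
    (ht : IsOpen t) (h : interior (s ∩ t) = ∅) : t ⊆ closure sᶜ := by
  rw [closure_compl]
  intro x hxt hxs
  have : x ∈ interior (s ∩ t) := by
    rw [interior_inter, ht.interior_eq]
    exact ⟨hxs, hxt⟩
  simp_all

theorem IsClopen.interior_closure_eq {X : Type*} [TopologicalSpace X] {s U : Set X}
    (hU : IsClopen U) (hsU : s ⊆ U) (hUs : U ⊆ closure s) : interior (closure s) = U := by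
  rw [subset_antisymm (closure_minimal hsU hU.isClosed) hUs, hU.isOpen.interior_eq]

section Words

variable {α : Type*}

theorem wordAppend_of_lt (w : List α) (s : ℕ → α) {n : ℕ} (h : n < w.length) :
    wordAppend w s n = w.get ⟨n, h⟩ :=
  dif_pos h

theorem wordAppend_length_add (w : List α) (s : ℕ → α) (n : ℕ) :
    wordAppend w s (w.length + n) = s n := by
  simp [wordAppend]

theorem eq_of_wordAppend_eq_of_length_lt {p q : List α} (hlt : p.length < q.length)
    {s s' : ℕ → α} (hs : wordAppend p s = wordAppend q s)
    (hs' : wordAppend p s' = wordAppend q s') : s = s' := by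
  have unfold_eq : ∀ t : ℕ → α, wordAppend p t = wordAppend q t → ∀ n, t n =
      if h : p.length + n < q.length then q.get ⟨p.length + n, h⟩
      else t (n - (q.length - p.length)) := by
    intro t ht n
    rw [← wordAppend_length_add p t n, ht, wordAppend]
    split_ifs
    · rfl
    · congr 1
      omega
  funext n
  induction n using Nat.strong_induction_on with
  | _ n ih =>
    rw [unfold_eq s hs n, unfold_eq s' hs' n]
    split_ifs
    · rfl
    · exact ih _ (by omega)

theorem subsingleton_setOf_wordAppend_eq {p q : List α} (hpq : p ≠ q) :
    {s : ℕ → α | wordAppend p s = wordAppend q s}.Subsingleton := by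
  intro s (hs : wordAppend p s = wordAppend q s) s' (hs' : wordAppend p s' = wordAppend q s')
  rcases lt_trichotomy p.length q.length with h | h | h
  · exact eq_of_wordAppend_eq_of_length_lt h hs hs'
  · refine absurd (List.ext_get h fun n hp hq => ?_) hpq
    simpa [wordAppend_of_lt _ _ hp, wordAppend_of_lt _ _ hq] using congrFun hs n
  · exact eq_of_wordAppend_eq_of_length_lt h hs.symm hs'.symm

end Words

section Cylinders

variable {m : ℕ} {k : Fin m → ℕ}

theorem mem_cyl_iff {w : ∀ i, List (Fin (k i))} {x : ∀ i : Fin m, ℕ → Fin (k i)} :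
    x ∈ cyl w ↔ ∀ i n (h : n < (w i).length), x i n = (w i).get ⟨n, h⟩ := by
  refine ⟨?_, fun hx => ⟨fun i n => x i (n + (w i).length), ?_⟩⟩
  · rintro ⟨y, rfl⟩ i n h
    exact wordAppend_of_lt _ _ h
  · funext i n
    unfold tupleAppend wordAppend
    split_ifs with h
    · exact (hx i n h).symm
    · exact congrArg (x i) (Nat.sub_add_cancel (not_lt.mp h))

theorem isClopen_cyl (w : ∀ i, List (Fin (k i))) : IsClopen (cyl w) := by
  have hcyl : cyl w = ⋂ (i : Fin m) (n : Fin (w i).length),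
      (fun x : ∀ i : Fin m, ℕ → Fin (k i) => x i n) ⁻¹' {(w i).get n} := by
    ext x
    simp only [mem_cyl_iff, mem_iInter, mem_preimage, mem_singleton_iff]
    exact ⟨fun h i n => h i n n.2, fun h i n hn => h i ⟨n, hn⟩⟩
  rw [hcyl]
  exact isClopen_iInter_of_finite fun i => isClopen_iInter_of_finite fun n =>
    (isClopen_discrete _).preimage ((continuous_apply _).comp (continuous_apply i))

variable {l : ℕ} {v u : Fin l → ∀ i, List (Fin (k i))}
  {ψ : (∀ i : Fin m, ℕ → Fin (k i)) → ∀ i : Fin m, ℕ → Fin (k i)}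

theorem apply_eq_self_of_mem_cyl (hψ : ∀ j x, ψ (tupleAppend (v j) x) = tupleAppend (u j) x)
    {j : Fin l} (huv : u j = v j) {x : ∀ i : Fin m, ℕ → Fin (k i)} (hx : x ∈ cyl (u j)) :
    ψ x = x := by
  obtain ⟨y, rfl⟩ := hx
  rw [huv, hψ, huv]

theorem exists_wordAppend_eq_of_apply_eq_self (hv : ∀ x, ∃ j, x ∈ cyl (v j))
    (hu : ∀ x, ∃! j, x ∈ cyl (u j)) (hψ : ∀ j x, ψ (tupleAppend (v j) x) = tupleAppend (u j) x)
    {j : Fin l} {x : ∀ i : Fin m, ℕ → Fin (k i)} (hfix : ψ x = x) (hx : x ∈ cyl (u j)) :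
    ∃ y, tupleAppend (v j) y = x ∧ tupleAppend (u j) y = x := by
  obtain ⟨j', y, hy⟩ := hv x
  have hux : tupleAppend (u j') y = x := by rw [← hψ, hy, hfix]
  obtain rfl : j' = j := (hu x).unique ⟨y, hux⟩ hx
  exact ⟨y, hy, hux⟩

theorem interior_fixed_inter_cyl_eq_empty (hk : ∀ i, 2 ≤ k i) (hv : ∀ x, ∃ j, x ∈ cyl (v j))
    (hu : ∀ x, ∃! j, x ∈ cyl (u j)) (hψ : ∀ j x, ψ (tupleAppend (v j) x) = tupleAppend (u j) x)
    {j : Fin l} (huv : u j ≠ v j) : interior ({x | ψ x = x} ∩ cyl (u j)) = ∅ := by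
  obtain ⟨i, hi⟩ := Function.ne_iff.mp huv
  have : Nontrivial (Fin (k i)) := Fin.nontrivial_iff_two_le.mpr (hk i)
  refine interior_eq_empty_of_image_eval_subsingleton (i := i) ?_
  rintro _ ⟨x, ⟨hfx, hx⟩, rfl⟩ _ ⟨x', ⟨hfx', hx'⟩, rfl⟩
  obtain ⟨y, hvy, huy⟩ := exists_wordAppend_eq_of_apply_eq_self hv hu hψ hfx hx
  obtain ⟨y', hvy', huy'⟩ := exists_wordAppend_eq_of_apply_eq_self hv hu hψ hfx' hx'
  have hyy' : y i = y' i := subsingleton_setOf_wordAppend_eq (Ne.symm hi)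
    (congrFun (hvy.trans huy.symm) i) (congrFun (hvy'.trans huy'.symm) i)
  simp only [Function.eval, ← hvy, ← hvy', tupleAppend, hyy']

end Cylinders

/-- For the homeomorphism of `∏ᵢ {0,…,kᵢ-1}^ℕ` induced by a table `(v; u)`, the regular
support is the union of the cylinders `uʲ·X` over the indices `j` with `uʲ ≠ vʲ`;
equivalently, in each such cylinder the fixed-point set is nowhere dense. -/
theorem brinThompson_table_rsupp (m l : ℕ) (k : Fin m → ℕ) (hk : ∀ i, 2 ≤ k i)
    (v u : Fin l → ∀ i : Fin m, List (Fin (k i)))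
    (hv : ∀ x, ∃! j : Fin l, x ∈ cyl (v j))
    (hu : ∀ x, ∃! j : Fin l, x ∈ cyl (u j))
    (ψ : (∀ i : Fin m, ℕ → Fin (k i)) ≃ₜ (∀ i : Fin m, ℕ → Fin (k i)))
    (hψ : ∀ (j : Fin l) (x), ψ (tupleAppend (v j) x) = tupleAppend (u j) x) :
    (interior (closure {x | ψ x ≠ x})
        = ⋃ (j : Fin l) (_ : u j ≠ v j), cyl (u j)) ∧
    ∀ j : Fin l, u j ≠ v j → IsNowhereDense ({x | ψ x = x} ∩ cyl (u j)) := by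
  have hint {j} (huv : u j ≠ v j) : interior ({x | ψ x = x} ∩ cyl (u j)) = ∅ :=
    interior_fixed_inter_cyl_eq_empty hk (fun x => (hv x).exists) hu hψ huv
  refine ⟨IsClopen.interior_closure_eq ?_ ?_ ?_, fun j huv => ?_⟩
  · exact isClopen_iUnion_of_finite fun j => isClopen_iUnion_of_finite fun _ => isClopen_cyl _
  · intro x (hx : ψ x ≠ x)
    obtain ⟨j, hj, -⟩ := hu x
    exact mem_biUnion (fun huv => hx (apply_eq_self_of_mem_cyl hψ huv hj)) hj
  · exact iUnion₂_subset fun j huv => (isClopen_cyl _).isOpen.subset_closure_compl (hint huv)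
  · exact ((isClosed_eq ψ.continuous continuous_id).inter (isClopen_cyl _).isClosed
      |>.isNowhereDense_iff).mpr (hint huv)
end
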